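/- arXiv:2506.05703 — 5 statements merged into one kernel-verified Lean document; each statement's English description precedes it below -/
import Mathlib

section
/- Let $(d_r)_{r\ge1}$ be integers $\ge 2$, $(p_r)_{r\ge1}$ probabilities in $(0,1]$, and let $f_r(z) = ((z-(1-p_r))/p_r)^{d_r}$, $\tilde f_r = f_r\circ\cdots\circ f_1$. Then the fibered filled Julia set $\mathcal{E} = \{\lambda \in \mathbb{C} : \limsup_{r\to\infty} |\tilde f_r(\lambda)| < \infty\}$ equals $\{\lambda \in \mathbb{C} : |\tilde f_r(\lambda)| \le 1 \text{ for all } r \ge 1\}$. -/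
/-- The polynomial `f_r(z) = ((z - (1 - p_r))/p_r)^(d_r)`. -/
noncomputable def fr (d : ℕ → ℕ) (p : ℕ → ℝ) (r : ℕ) (z : ℂ) : ℂ :=
  ((z - (1 - (p r : ℂ))) / (p r : ℂ)) ^ (d r)

/-- The composition `f̃_r = f_r ∘ ⋯ ∘ f_1`, with `f̃_0 = id`. -/
noncomputable def ftil (d : ℕ → ℕ) (p : ℕ → ℝ) : ℕ → ℂ → ℂ
  | 0 => fun z => z
  | r + 1 => fun z => fr d p (r + 1) (ftil d p r z)

/-! Outside the closed unit disc every `f_r` at least squares the modulus, because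
`|z - (1 - p)| ≥ |z| - (1 - p) ≥ p |z|` when `|z| ≥ 1`. So once an orbit leaves the disc its
modulus grows doubly exponentially, and a bounded orbit never leaves it. -/

theorem norm_le_norm_sub_one_sub_div {p : ℝ} (hp0 : 0 < p) (hp1 : p ≤ 1) {z : ℂ}
    (hz : 1 ≤ ‖z‖) : ‖z‖ ≤ ‖(z - (1 - (p : ℂ))) / p‖ := by
  have hnorm_one_sub : ‖1 - (p : ℂ)‖ = 1 - p := by
    rw [← Complex.ofReal_one, ← Complex.ofReal_sub, Complex.norm_real, Real.norm_eq_abs,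
      abs_of_nonneg (by linarith)]
  have htriangle := norm_sub_norm_le z (1 - (p : ℂ))
  rw [norm_div, Complex.norm_real, Real.norm_eq_abs, abs_of_pos hp0, le_div_iff₀ hp0]
  nlinarith

theorem norm_sq_le_norm_fr {d : ℕ → ℕ} {p : ℕ → ℝ} {r : ℕ} (hd : 2 ≤ d r) (hp0 : 0 < p r)
    (hp1 : p r ≤ 1) {z : ℂ} (hz : 1 ≤ ‖z‖) : ‖z‖ ^ 2 ≤ ‖fr d p r z‖ := by
  rw [fr, norm_pow]
  calc ‖z‖ ^ 2 ≤ ‖z‖ ^ d r := pow_le_pow_right₀ hz hd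
    _ ≤ _ := pow_le_pow_left₀ (norm_nonneg z) (norm_le_norm_sub_one_sub_div hp0 hp1 hz) _

theorem tendsto_atTop_of_sq_le_succ {u : ℕ → ℝ} (hsq : ∀ n, 1 ≤ u n → u n ^ 2 ≤ u (n + 1))
    {r : ℕ} (hr : 1 < u r) : Filter.Tendsto u Filter.atTop Filter.atTop := by
  have hgrowth : ∀ k, u r ^ 2 ^ k ≤ u (k + r) := by
    intro k
    induction k with
    | zero => simp
    | succ k ih =>
      have hk : 1 ≤ u (k + r) := (one_le_pow₀ hr.le).trans ih
      calc u r ^ 2 ^ (k + 1) = (u r ^ 2 ^ k) ^ 2 := by rw [pow_succ, pow_mul]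
        _ ≤ u (k + r) ^ 2 := by gcongr
        _ ≤ u (k + 1 + r) := by rw [add_right_comm]; exact hsq _ hk
  have hdouble : Filter.Tendsto (fun k : ℕ => u r ^ 2 ^ k) Filter.atTop Filter.atTop :=
    (tendsto_pow_atTop_atTop_of_one_lt hr).comp (tendsto_pow_atTop_atTop_of_one_lt one_lt_two)
  exact (Filter.tendsto_add_atTop_iff_nat r).1 (Filter.tendsto_atTop_mono hgrowth hdouble)

/-- The fibered filled Julia set `{λ | limsup_r |f̃_r(λ)| < ∞}` equals
`{λ | |f̃_r(λ)| ≤ 1 for all r ≥ 1}`. -/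
theorem stmt3 (d : ℕ → ℕ) (p : ℕ → ℝ)
    (hd : ∀ r, 1 ≤ r → 2 ≤ d r) (hp : ∀ r, 1 ≤ r → 0 < p r ∧ p r ≤ 1) :
    {lam : ℂ | Filter.IsBoundedUnder (· ≤ ·) Filter.atTop
        (fun r : ℕ => ‖ftil d p r lam‖)} =
      {lam : ℂ | ∀ r, 1 ≤ r → ‖ftil d p r lam‖ ≤ 1} := by
  ext lam
  constructor
  · intro hbounded r _
    by_contra! hescape
    have hsq : ∀ n, 1 ≤ ‖ftil d p n lam‖ → ‖ftil d p n lam‖ ^ 2 ≤ ‖ftil d p (n + 1) lam‖ :=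
      fun n hn => norm_sq_le_norm_fr (hd _ n.succ_pos) (hp _ n.succ_pos).1 (hp _ n.succ_pos).2 hn
    exact Filter.not_isBoundedUnder_of_tendsto_atTop
      (tendsto_atTop_of_sq_le_succ hsq hescape) hbounded
  · intro hdisc
    exact Filter.isBoundedUnder_of_eventually_le (Filter.eventually_atTop.2 ⟨1, hdisc⟩)
end

section
/- Let $(d_r)_{r\ge1}$ be a bounded sequence of integers $\ge 2$ and $(p_r)_{r\ge1}$ probabilities in $(0,1]$, and let $\iota_\lambda(r) = (\tilde f_{r-1}(\lambda) - (1-p_r))/p_r$ where $\tilde f_r = f_r\circ\cdots\circ f_1$ with $f_r(z) = ((z-(1-p_r))/p_r)^{d_r}$. If the sequence $(\iota_\lambda(r))_{r\ge1}$ is bounded and $\lim_{r\to\infty} \iota_\lambda(r) = 1$, then there exists $r_0 \ge 1$ such that $\iota_\lambda(r) = 1$ for all $r \ge r_0$. -/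
/-! Near `1` the map `z ↦ z ^ k` with `k ≥ 2` expands distances to `1`, since
`z ^ k - 1 = (z - 1) (1 + z + ⋯ + z ^ (k - 1))` and the second factor is close to `k`; as the
degrees are bounded this holds on one neighbourhood of `1` for all of them. Dividing by
`p_{r+1} ≤ 1` only expands further, so once `ι_λ(r)` is in that neighbourhood the distance
`‖ι_λ(r) - 1‖` is nondecreasing. A nondecreasing sequence of nonnegative reals tending to `0`
vanishes. -/

open Filter Topology

/-- `ι_λ(r) = (f̃_{r-1}(λ) - (1 - p_r)) / p_r`. -/
noncomputable def iota (d : ℕ → ℕ) (p : ℕ → ℝ) (lam : ℂ) (r : ℕ) : ℂ :=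
  (ftil d p (r - 1) lam - (1 - (p r : ℂ))) / (p r : ℂ)

theorem eventually_eq_of_tendsto_of_norm_sub_le_succ {E : Type*} [NormedAddCommGroup E]
    {u : ℕ → E} {x : E} (hu : Tendsto u atTop (𝓝 x))
    (hmono : ∀ᶠ n in atTop, ‖u n - x‖ ≤ ‖u (n + 1) - x‖) :
    ∀ᶠ n in atTop, u n = x := by
  obtain ⟨N, hN⟩ := eventually_atTop.mp hmono
  filter_upwards [eventually_ge_atTop N] with n hn
  have hshift : Monotone fun m => ‖u (m + n) - x‖ :=
    monotone_nat_of_le_succ fun m => by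
      simpa only [Nat.succ_add] using hN (m + n) (by omega)
  have hzero : Tendsto (fun m => ‖u (m + n) - x‖) atTop (𝓝 0) :=
    tendsto_iff_norm_sub_tendsto_zero.mp ((tendsto_add_atTop_iff_nat n).mpr hu)
  have hle : ‖u n - x‖ ≤ 0 := by simpa only [zero_add] using hshift.ge_of_tendsto hzero 0
  exact sub_eq_zero.mp (norm_le_zero_iff.mp hle)

theorem eventually_norm_sub_one_le_norm_pow_sub_one {𝕜 : Type*} [RCLike 𝕜] {k : ℕ}
    (hk : 2 ≤ k) : ∀ᶠ z in 𝓝 (1 : 𝕜), ‖z - 1‖ ≤ ‖z ^ k - 1‖ := by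
  have hcont : Continuous fun z : 𝕜 => ‖∑ i ∈ Finset.range k, z ^ i‖ := by fun_prop
  have hat_one : (1 : ℝ) < ‖∑ i ∈ Finset.range k, (1 : 𝕜) ^ i‖ := by
    simp only [one_pow, Finset.sum_const, Finset.card_range, nsmul_eq_mul, mul_one,
      RCLike.norm_natCast]
    exact_mod_cast hk
  filter_upwards [hcont.continuousAt.eventually (lt_mem_nhds hat_one)] with z hz
  rw [← geom_sum_mul, norm_mul]
  exact le_mul_of_one_le_left (norm_nonneg _) hz.le

theorem eventually_forall_norm_sub_one_le_norm_pow_sub_one (𝕜 : Type*) [RCLike 𝕜] (D : ℕ) :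
    ∀ᶠ z in 𝓝 (1 : 𝕜), ∀ k, 2 ≤ k → k ≤ D → ‖z - 1‖ ≤ ‖z ^ k - 1‖ := by
  have := (eventually_all_finset (Finset.Icc 2 D)).mpr fun k hk =>
    eventually_norm_sub_one_le_norm_pow_sub_one (𝕜 := 𝕜) (Finset.mem_Icc.mp hk).1
  filter_upwards [this] with z hz k hk2 hkD
  exact hz k (Finset.mem_Icc.mpr ⟨hk2, hkD⟩)

theorem iota_succ_sub_one (d : ℕ → ℕ) (p : ℕ → ℝ) (lam : ℂ) {r : ℕ} (hr : 1 ≤ r)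
    (hp : p (r + 1) ≠ 0) :
    iota d p lam (r + 1) - 1 = (iota d p lam r ^ d r - 1) / (p (r + 1) : ℂ) := by
  obtain ⟨n, rfl⟩ : ∃ n, r = n + 1 := ⟨r - 1, by omega⟩
  have hp' : (p (n + 2) : ℂ) ≠ 0 := by exact_mod_cast hp
  simp only [iota, Nat.add_sub_cancel, ftil, fr]
  field_simp
  ring

theorem norm_iota_pow_sub_one_le (d : ℕ → ℕ) (p : ℕ → ℝ) (lam : ℂ) {r : ℕ} (hr : 1 ≤ r)
    (hp0 : 0 < p (r + 1)) (hp1 : p (r + 1) ≤ 1) :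
    ‖iota d p lam r ^ d r - 1‖ ≤ ‖iota d p lam (r + 1) - 1‖ := by
  rw [iota_succ_sub_one d p lam hr hp0.ne', norm_div, Complex.norm_real, Real.norm_of_nonneg hp0.le]
  exact le_div_self (norm_nonneg _) hp0 hp1

theorem stmt9_general (d : ℕ → ℕ) (p : ℕ → ℝ)
    (hd : ∀ r, 1 ≤ r → 2 ≤ d r) (hp : ∀ r, 1 ≤ r → 0 < p r ∧ p r ≤ 1)
    (D : ℕ) (hD : ∀ r, 1 ≤ r → d r ≤ D) (lam : ℂ)
    (hlim : Filter.Tendsto (fun r => iota d p lam r) Filter.atTop (nhds 1)) :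
    ∃ r0, 1 ≤ r0 ∧ ∀ r, r0 ≤ r → iota d p lam r = 1 := by
  have hexpand : ∀ᶠ r in atTop, ‖iota d p lam r - 1‖ ≤ ‖iota d p lam (r + 1) - 1‖ := by
    filter_upwards [hlim.eventually (eventually_forall_norm_sub_one_le_norm_pow_sub_one ℂ D),
      eventually_ge_atTop 1] with r hnear hr
    obtain ⟨hp0, hp1⟩ := hp (r + 1) (by omega)
    exact (hnear (d r) (hd r hr) (hD r hr)).trans (norm_iota_pow_sub_one_le d p lam hr hp0 hp1)
  obtain ⟨r0, hr0⟩ := eventually_atTop.mp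
    (eventually_eq_of_tendsto_of_norm_sub_le_succ hlim hexpand)
  exact ⟨max 1 r0, le_max_left _ _, fun r hr => hr0 r (le_of_max_le_right hr)⟩

/-- If the sequence `(d_r)` is bounded, `(ι_λ(r))_{r ≥ 1}` is bounded and `ι_λ(r) → 1`, then
`ι_λ(r) = 1` for all sufficiently large `r`. -/
theorem stmt9 (d : ℕ → ℕ) (p : ℕ → ℝ)
    (hd : ∀ r, 1 ≤ r → 2 ≤ d r) (hp : ∀ r, 1 ≤ r → 0 < p r ∧ p r ≤ 1)
    (D : ℕ) (hD : ∀ r, 1 ≤ r → d r ≤ D) (lam : ℂ)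
    (hb : ∃ M : ℝ, ∀ r, 1 ≤ r → ‖iota d p lam r‖ ≤ M)
    (hlim : Filter.Tendsto (fun r => iota d p lam r) Filter.atTop (nhds 1)) :
    ∃ r0, 1 ≤ r0 ∧ ∀ r, r0 ≤ r → iota d p lam r = 1 :=
  stmt9_general d p hd hp D hD lam hlim
end

section
/- Let $(d_r)_{r\ge1}$ be integers $\ge 2$ and $(p_r)_{r\ge1}$ probabilities in $(0,1]$ with $\lim_{r\to\infty} p_r = 1$, and let $f_r(z) = ((z-(1-p_r))/p_r)^{d_r}$, $\tilde f_r = f_r\circ\cdots\circ f_1$. Suppose $\lambda \in \mathbb{C}$ satisfies: $(\tilde f_r(\lambda))_r$ is bounded, and $|\tilde f_r(\lambda)| < \rho_0$ for infinitely many $r$, for some $\rho_0 \in (0,1)$. Then $\lim_{r\to\infty} \tilde f_r(\lambda) = 0$. -/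
open Filter Topology

lemma norm_sub_one_sub_div_le (z : ℂ) {q : ℝ} (hq : 0 < q) :
    ‖(z - (1 - (q : ℂ))) / q‖ ≤ (‖z‖ + |1 - q|) / q := by
  rw [norm_div, Complex.norm_real, Real.norm_of_nonneg hq.le]
  gcongr
  calc ‖z - (1 - (q : ℂ))‖ ≤ ‖z‖ + ‖(1 - (q : ℂ))‖ := norm_sub_le _ _
    _ = ‖z‖ + |1 - q| := by rw [← Complex.ofReal_one, ← Complex.ofReal_sub, Complex.norm_real,
        Real.norm_eq_abs]

lemma norm_sub_one_sub_div_pow_le (z : ℂ) {q : ℝ} (hq : 0 < q) {n : ℕ} (hn : 2 ≤ n)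
    (hb : (‖z‖ + |1 - q|) / q ≤ 1) :
    ‖((z - (1 - (q : ℂ))) / q) ^ n‖ ≤ ((‖z‖ + |1 - q|) / q) ^ 2 := by
  have hw := norm_sub_one_sub_div_le z hq
  rw [norm_pow]
  calc ‖(z - (1 - (q : ℂ))) / q‖ ^ n ≤ ‖(z - (1 - (q : ℂ))) / q‖ ^ 2 :=
        pow_le_pow_of_le_one (norm_nonneg _) (hw.trans hb) hn
    _ ≤ ((‖z‖ + |1 - q|) / q) ^ 2 := pow_le_pow_left₀ (norm_nonneg _) hw 2

lemma add_abs_one_sub_div_le_one_and_sq_le {ε ρ c q t : ℝ} (hε : 0 < ε) (hερ : ε ≤ ρ)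
    (ht0 : 0 ≤ t) (htρ : t ≤ ρ) (hρ : ρ ≤ 1) (hc : c ≤ 1) (hq : 0 < q)
    (hqc : ρ * ((1 + |1 - q| / ε) / q) ^ 2 ≤ c) :
    (t + |1 - q|) / q ≤ 1 ∧ ((t + |1 - q|) / q) ^ 2 ≤ c * max ε t := by
  set m := max ε t
  set s := (1 + |1 - q| / ε) / q
  have hm : ε ≤ m := le_max_left _ _
  have hmρ : m ≤ ρ := max_le hερ htρ
  have hb0 : 0 ≤ (t + |1 - q|) / q := by positivity
  have hbm : (t + |1 - q|) / q ≤ m * s := by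
    have : |1 - q| ≤ m * (|1 - q| / ε) := by
      rw [mul_div_assoc', le_div_iff₀ hε]
      nlinarith [abs_nonneg (1 - q)]
    rw [mul_div_assoc', div_le_div_iff_of_pos_right hq]
    linarith [le_max_right ε t]
  have hsq : ((t + |1 - q|) / q) ^ 2 ≤ c * m :=
    calc ((t + |1 - q|) / q) ^ 2 ≤ (m * s) ^ 2 := pow_le_pow_left₀ hb0 hbm 2
      _ = m * (m * s ^ 2) := by ring
      _ ≤ m * (ρ * s ^ 2) := by gcongr
      _ ≤ m * c := by gcongr
      _ = c * m := mul_comm _ _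
  refine ⟨?_, hsq⟩
  have : ((t + |1 - q|) / q) ^ 2 ≤ 1 := hsq.trans (by nlinarith)
  nlinarith

lemma eventually_le_of_le_mul_max {a : ℕ → ℝ} {c ε ρ : ℝ} (hc0 : 0 ≤ c) (hc1 : c < 1)
    (hε : 0 < ε) (hερ : ε ≤ ρ) (haρ : a 0 ≤ ρ)
    (h : ∀ k, a k ≤ ρ → a (k + 1) ≤ c * max ε (a k)) :
    ∀ᶠ k in atTop, a k ≤ ε := by
  have hbound : ∀ k, a k ≤ max ε (c ^ k * a 0) := by
    intro k
    induction k with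
    | zero => simp
    | succ k ih =>
      have hck : c ^ k * a 0 ≤ ρ := by
        nlinarith [pow_le_one₀ hc0 hc1.le (n := k), pow_nonneg hc0 k]
      calc a (k + 1) ≤ c * max ε (a k) := h k (ih.trans (max_le hερ hck))
        _ ≤ c * max ε (c ^ k * a 0) :=
          mul_le_mul_of_nonneg_left (max_le (le_max_left _ _) ih) hc0
        _ = max (c * ε) (c ^ (k + 1) * a 0) := by
          rw [mul_max_of_nonneg _ _ hc0, pow_succ', mul_assoc]
        _ ≤ max ε (c ^ (k + 1) * a 0) := by gcongr; nlinarith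
  have hpow : Tendsto (fun k => c ^ k * a 0) atTop (𝓝 0) := by
    simpa using (tendsto_pow_atTop_nhds_zero_of_lt_one hc0 hc1).mul_const (a 0)
  filter_upwards [hpow.eventually (gt_mem_nhds hε)] with k hk
  exact (hbound k).trans (max_le le_rfl hk.le)

lemma eventually_le_of_le_sq_add_abs_one_sub_div {a q : ℕ → ℝ} {ρ : ℝ} (ha : ∀ k, 0 ≤ a k)
    (hq : Tendsto q atTop (𝓝 1)) (hρ : ρ < 1) (hfreq : ∃ᶠ k in atTop, a k < ρ)
    (hstep : ∀ᶠ k in atTop,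
      (a k + |1 - q k|) / q k ≤ 1 → a (k + 1) ≤ ((a k + |1 - q k|) / q k) ^ 2)
    {ε : ℝ} (hε : 0 < ε) (hερ : ε ≤ ρ) :
    ∀ᶠ k in atTop, a k ≤ ε := by
  obtain ⟨c, hc, hc1⟩ := exists_between hρ
  have hqc : ∀ᶠ k in atTop, ρ * ((1 + |1 - q k| / ε) / q k) ^ 2 < c := by
    have hcont : ContinuousAt (fun x : ℝ => ρ * ((1 + |1 - x| / ε) / x) ^ 2) 1 :=
      by fun_prop (disch := norm_num)
    exact hq.eventually (hcont.eventually (gt_mem_nhds (by simpa using hc)))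
  obtain ⟨N, hN⟩ := eventually_atTop.1
    (hstep.and (hqc.and (hq.eventually (lt_mem_nhds one_pos))))
  obtain ⟨R, hRN, hRρ⟩ := frequently_atTop.1 hfreq N
  have htail : ∀ᶠ j in atTop, a (R + j) ≤ ε := by
    refine eventually_le_of_le_mul_max (a := fun j => a (R + j)) (by linarith) hc1 hε hερ
      hRρ.le ?_
    intro j hj
    obtain ⟨hstep, hqc, hq⟩ := hN (R + j) (by omega)
    obtain ⟨hb, hsq⟩ :=
      add_abs_one_sub_div_le_one_and_sq_le hε hερ (ha _) hj hρ.le hc1.le hq hqc.le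
    exact (hstep hb).trans hsq
  filter_upwards [(tendsto_sub_atTop_nat R).eventually htail, eventually_ge_atTop R]
    with k hk hkR
  rwa [Nat.add_sub_cancel' hkR] at hk

theorem tendsto_zero_of_le_sq_add_abs_one_sub_div {a q : ℕ → ℝ} {ρ : ℝ} (ha : ∀ k, 0 ≤ a k)
    (hq : Tendsto q atTop (𝓝 1)) (hρ : ρ < 1) (hfreq : ∃ᶠ k in atTop, a k < ρ)
    (hstep : ∀ᶠ k in atTop,
      (a k + |1 - q k|) / q k ≤ 1 → a (k + 1) ≤ ((a k + |1 - q k|) / q k) ^ 2) :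
    Tendsto a atTop (𝓝 0) := by
  obtain ⟨k, hk⟩ := hfreq.exists
  have hρ0 : 0 < ρ := (ha k).trans_lt hk
  refine tendsto_order.2 ⟨fun b hb => Eventually.of_forall fun k => hb.trans_le (ha k),
    fun b hb => ?_⟩
  have hε : 0 < min (b / 2) ρ := lt_min (by linarith) hρ0
  filter_upwards [eventually_le_of_le_sq_add_abs_one_sub_div ha hq hρ hfreq hstep hε
    (min_le_right _ _)] with k hk
  exact hk.trans_lt ((min_le_left _ _).trans_lt (by linarith))

theorem stmt14_general (d : ℕ → ℕ) (p : ℕ → ℝ)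
    (hd : ∀ r, 1 ≤ r → 2 ≤ d r)
    (hp1 : Filter.Tendsto p Filter.atTop (nhds 1))
    (lam : ℂ)
    (ρ : ℝ) (hρ1 : ρ < 1)
    (hinf : ∀ N : ℕ, ∃ r, N ≤ r ∧ ‖ftil d p r lam‖ < ρ) :
    Filter.Tendsto (fun r => ftil d p r lam) Filter.atTop (nhds 0) := by
  have hq : Tendsto (fun r => p (r + 1)) atTop (𝓝 1) := hp1.comp (tendsto_add_atTop_nat 1)
  refine tendsto_zero_iff_norm_tendsto_zero.2 <|
    tendsto_zero_of_le_sq_add_abs_one_sub_div (fun r => norm_nonneg _) hq hρ1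
      (frequently_atTop.2 hinf) ?_
  filter_upwards [hq.eventually (lt_mem_nhds one_pos)] with r hr hb
  exact norm_sub_one_sub_div_pow_le _ hr (hd (r + 1) (by omega)) hb

/-- Zero–one dichotomy: if `p_r → 1`, the orbit `(f̃_r(λ))` is bounded, and `|f̃_r(λ)| < ρ₀`
for infinitely many `r` with `ρ₀ < 1`, then `f̃_r(λ) → 0`. -/
theorem stmt14 (d : ℕ → ℕ) (p : ℕ → ℝ)
    (hd : ∀ r, 1 ≤ r → 2 ≤ d r) (hp : ∀ r, 1 ≤ r → 0 < p r ∧ p r ≤ 1)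
    (hp1 : Filter.Tendsto p Filter.atTop (nhds 1))
    (lam : ℂ)
    (hbdd : ∃ M : ℝ, ∀ r : ℕ, ‖ftil d p r lam‖ ≤ M)
    (ρ : ℝ) (hρ0 : 0 < ρ) (hρ1 : ρ < 1)
    (hinf : ∀ N : ℕ, ∃ r, N ≤ r ∧ ‖ftil d p r lam‖ < ρ) :
    Filter.Tendsto (fun r => ftil d p r lam) Filter.atTop (nhds 0) :=
  stmt14_general d p hd hp1 lam ρ hρ1 hinf
end

section
/- Let $(d_r)_{r\ge1}$ be integers $\ge 2$ and $(p_r)_{r\ge1}$ probabilities in $(0,1]$, with $f_r$, $\tilde f_r$ as usual. If $\lambda \in \mathbb{C}$ satisfies $\tilde f_{r_0}(\lambda) = 1$ for some $r_0 \ge 1$, then $\tilde f_r(\lambda) = 1$ for all $r \ge r_0$; moreover $\lambda$ lies in the boundary of the fibered filled Julia set $\mathcal{E} = \{z : (\tilde f_r(z))_r \text{ bounded}\}$, i.e., $\lambda \in \mathcal{E}$ and every neighborhood of $\lambda$ contains a point not in $\mathcal{E}$. -/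
lemma norm_le_norm_sub_div {q : ℝ} (hq₀ : 0 < q) (hq₁ : q ≤ 1) {w : ℂ} (hw : 1 ≤ ‖w‖) :
    ‖w‖ ≤ ‖(w - (1 - (q : ℂ))) / q‖ := by
  have h1q : ‖1 - (q : ℂ)‖ = 1 - q := by
    rw [← Complex.ofReal_one, ← Complex.ofReal_sub, Complex.norm_real, Real.norm_eq_abs,
      abs_of_nonneg (sub_nonneg.2 hq₁)]
  have htri : ‖w‖ - (1 - q) ≤ ‖w - (1 - (q : ℂ))‖ := h1q ▸ norm_sub_norm_le _ _
  rw [norm_div, Complex.norm_real, Real.norm_of_nonneg hq₀.le, le_div_iff₀ hq₀]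
  nlinarith [mul_nonneg (sub_nonneg.2 hw) (sub_nonneg.2 hq₁)]

open Filter Topology

section Iteration

variable {d : ℕ → ℕ} {p : ℕ → ℝ}

@[simp]
lemma ftil_succ_apply (r : ℕ) (z : ℂ) : ftil d p (r + 1) z = fr d p (r + 1) (ftil d p r z) :=
  rfl

lemma fr_one {r : ℕ} (hp : p r ≠ 0) : fr d p r 1 = 1 := by
  rw [fr, sub_sub_cancel, div_self (by exact_mod_cast hp), one_pow]

lemma ftil_eq_one_of_le (hp : ∀ r, 1 ≤ r → p r ≠ 0) {lam : ℂ} {r₀ : ℕ}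
    (h : ftil d p r₀ lam = 1) {r : ℕ} (hr : r₀ ≤ r) : ftil d p r lam = 1 := by
  induction r, hr using Nat.le_induction with
  | base => exact h
  | succ r _ ih => rw [ftil_succ_apply, ih, fr_one (hp _ r.succ_pos)]

lemma fr_surjective {r : ℕ} (hd : d r ≠ 0) (hp : p r ≠ 0) : Function.Surjective (fr d p r) := by
  intro v
  obtain ⟨x, rfl⟩ := IsAlgClosed.exists_pow_nat_eq v (Nat.pos_of_ne_zero hd)
  refine ⟨1 - p r + p r * x, ?_⟩
  rw [fr, add_sub_cancel_left, mul_div_cancel_left₀ _ (by exact_mod_cast hp)]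

lemma ftil_surjective (hd : ∀ r, 1 ≤ r → d r ≠ 0) (hp : ∀ r, 1 ≤ r → p r ≠ 0) (r : ℕ) :
    Function.Surjective (ftil d p r) := by
  induction r with
  | zero => exact Function.surjective_id
  | succ r ih => exact (fr_surjective (hd _ r.succ_pos) (hp _ r.succ_pos)).comp ih

lemma differentiable_ftil (r : ℕ) : Differentiable ℂ (ftil d p r) := by
  induction r with
  | zero => exact differentiable_id
  | succ r ih =>
    change Differentiable ℂ fun z => fr d p (r + 1) (ftil d p r z)
    unfold fr
    fun_prop

lemma sq_norm_le_norm_fr {r : ℕ} (hd : 2 ≤ d r) (hp₀ : 0 < p r) (hp₁ : p r ≤ 1) {w : ℂ}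
    (hw : 1 < ‖w‖) : ‖w‖ ^ 2 ≤ ‖fr d p r w‖ :=
  calc ‖w‖ ^ 2 ≤ ‖w‖ ^ d r := pow_le_pow_right₀ hw.le hd
    _ ≤ ‖(w - (1 - (p r : ℂ))) / p r‖ ^ d r :=
        pow_le_pow_left₀ (norm_nonneg _) (norm_le_norm_sub_div hp₀ hp₁ hw.le) _
    _ = ‖fr d p r w‖ := (norm_pow _ _).symm

end Iteration

lemma tendsto_atTop_of_one_lt_of_sq_le {a : ℕ → ℝ} (h₀ : 1 < a 0)
    (h : ∀ k, 1 < a k → a k ^ 2 ≤ a (k + 1)) : Tendsto a atTop atTop := by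
  have hpow : ∀ k, a 0 ^ 2 ^ k ≤ a k := by
    intro k
    induction k with
    | zero => simp
    | succ k ih =>
      have hk : 1 < a k := (one_lt_pow₀ h₀ (pow_ne_zero _ two_ne_zero)).trans_le ih
      calc a 0 ^ 2 ^ (k + 1) = (a 0 ^ 2 ^ k) ^ 2 := by rw [pow_succ, pow_mul]
        _ ≤ a k ^ 2 := pow_le_pow_left₀ (by positivity) ih _
        _ ≤ a (k + 1) := h k hk
  refine tendsto_atTop_mono hpow ((tendsto_pow_atTop_atTop_of_one_lt h₀).comp ?_)
  exact tendsto_pow_atTop_atTop_of_one_lt one_lt_two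

lemma not_exists_forall_norm_ftil_le {d : ℕ → ℕ} {p : ℕ → ℝ}
    (hd : ∀ r, 1 ≤ r → 2 ≤ d r) (hp : ∀ r, 1 ≤ r → 0 < p r ∧ p r ≤ 1) {z : ℂ} {r₀ : ℕ}
    (hz : 1 < ‖ftil d p r₀ z‖) : ¬ ∃ M : ℝ, ∀ r : ℕ, ‖ftil d p r z‖ ≤ M := by
  rintro ⟨M, hM⟩
  have hesc : Tendsto (fun k => ‖ftil d p (r₀ + k) z‖) atTop atTop := by
    refine tendsto_atTop_of_one_lt_of_sq_le hz fun k hk => ?_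
    obtain ⟨hp₀, hp₁⟩ := hp (r₀ + k + 1) (by omega)
    exact sq_norm_le_norm_fr (hd _ (by omega)) hp₀ hp₁ hk
  obtain ⟨k, hk⟩ := (hesc.eventually_gt_atTop M).exists
  exact (hM _).not_gt hk

lemma Differentiable.exists_norm_gt_near {f : ℂ → ℂ} (hf : Differentiable ℂ f) {c : ℂ}
    (hnc : ∃ w, f w ≠ f c) {ε : ℝ} (hε : 0 < ε) : ∃ z, ‖z - c‖ < ε ∧ ‖f c‖ < ‖f z‖ := by
  by_contra! hmax
  have hloc : IsLocalMax (Norm.norm ∘ f) c :=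
    Metric.eventually_nhds_iff.2 ⟨ε, hε, fun {z} hz => hmax z (by rwa [← dist_eq_norm])⟩
  have hconst : f =ᶠ[𝓝 c] fun _ => f c :=
    Complex.eventually_eq_of_isLocalMax_norm (.of_forall hf) hloc
  obtain ⟨w, hw⟩ := hnc
  have hanalytic : AnalyticOnNhd ℂ f Set.univ := fun z _ => hf.analyticAt z
  exact hw (congrFun (hanalytic.eq_of_eventuallyEq analyticOnNhd_const hconst) w)

theorem stmt15_general (d : ℕ → ℕ) (p : ℕ → ℝ)
    (hd : ∀ r, 1 ≤ r → 2 ≤ d r) (hp : ∀ r, 1 ≤ r → 0 < p r ∧ p r ≤ 1)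
    (lam : ℂ) (r0 : ℕ) (h : ftil d p r0 lam = 1) :
    (∀ r, r0 ≤ r → ftil d p r lam = 1) ∧
    (∃ M : ℝ, ∀ r : ℕ, ‖ftil d p r lam‖ ≤ M) ∧
    (∀ ε : ℝ, 0 < ε → ∃ z : ℂ, ‖z - lam‖ < ε ∧
      ¬ ∃ M : ℝ, ∀ r : ℕ, ‖ftil d p r z‖ ≤ M) := by
  have hp₀ : ∀ r, 1 ≤ r → p r ≠ 0 := fun r hr => (hp r hr).1.ne'
  have hfix : ∀ r, r0 ≤ r → ftil d p r lam = 1 := fun r => ftil_eq_one_of_le hp₀ h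
  refine ⟨hfix, ?_, fun ε hε => ?_⟩
  · have hlim : Tendsto (fun r => ‖ftil d p r lam‖) atTop (𝓝 1) :=
      tendsto_const_nhds.congr' <| eventually_atTop.2
        ⟨r0, fun r hr => by simp only [hfix r hr, norm_one]⟩
    obtain ⟨M, hM⟩ := hlim.bddAbove_range
    exact ⟨M, fun r => hM ⟨r, rfl⟩⟩
  · have hnc : ∃ w, ftil d p r0 w ≠ ftil d p r0 lam := by
      obtain ⟨w, hw⟩ := ftil_surjective (fun r hr => (zero_lt_two.trans_le (hd r hr)).ne') hp₀ r0 0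
      exact ⟨w, by rw [hw, h]; exact zero_ne_one⟩
    obtain ⟨z, hz, hgt⟩ := (differentiable_ftil r0).exists_norm_gt_near hnc hε
    rw [h, norm_one] at hgt
    exact ⟨z, hz, not_exists_forall_norm_ftil_le hd hp hgt⟩

/-- If `f̃_{r₀}(λ) = 1` for some `r₀ ≥ 1`, then `f̃_r(λ) = 1` for all `r ≥ r₀`; moreover `λ`
lies in the boundary of the fibered filled Julia set: the orbit of `λ` is bounded, while
every neighborhood of `λ` contains a point with unbounded orbit. -/
theorem stmt15 (d : ℕ → ℕ) (p : ℕ → ℝ)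
    (hd : ∀ r, 1 ≤ r → 2 ≤ d r) (hp : ∀ r, 1 ≤ r → 0 < p r ∧ p r ≤ 1)
    (lam : ℂ) (r0 : ℕ) (hr0 : 1 ≤ r0) (h : ftil d p r0 lam = 1) :
    (∀ r, r0 ≤ r → ftil d p r lam = 1) ∧
    (∃ M : ℝ, ∀ r : ℕ, ‖ftil d p r lam‖ ≤ M) ∧
    (∀ ε : ℝ, 0 < ε → ∃ z : ℂ, ‖z - lam‖ < ε ∧
      ¬ ∃ M : ℝ, ∀ r : ℕ, ‖ftil d p r z‖ ≤ M) :=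
  stmt15_general d p hd hp lam r0 h
end

section
/- Let $(d_r)_{r\ge1}$ be integers $\ge 2$ and $(p_r)_{r\ge1}$ probabilities in $(0,1]$, and let $\mathrm{p}(n,m)$ be the transition probabilities of the stochastic adding machine on $\mathbb{Z}_{\ge0}$ (as defined from the counter $s_n$). Then for every $m \ge 1$, $\sum_{n\ge0} \mathrm{p}(n,m) = 1$, while $\sum_{n\ge0} \mathrm{p}(n,0) = 1 - \prod_{r=1}^{\infty} p_r$. In particular, the transition matrix is doubly stochastic if and only if $\prod_{r=1}^{\infty} p_r = 0$. -/
open Finset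

/-- partial base products -/
def qq (d : ℕ → ℕ) (j : ℕ) : ℕ := ∏ i ∈ Finset.Icc 1 j, d i

lemma qq_zero (d : ℕ → ℕ) : qq d 0 = 1 := by simp [qq]

lemma qq_succ (d : ℕ → ℕ) (j : ℕ) : qq d (j+1) = qq d j * d (j+1) :=
  Finset.prod_Icc_succ_top (Nat.succ_le_succ (Nat.zero_le j)) _

lemma qq_pos {d : ℕ → ℕ} (hd : ∀ r, 1 ≤ r → 2 ≤ d r) (j : ℕ) : 1 ≤ qq d j := by
  induction j with
  | zero => simp [qq_zero]
  | succ t ih =>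
    rw [qq_succ]
    have := hd (t+1) (by omega)
    calc 1 ≤ qq d t * 1 := by omega
    _ ≤ qq d t * d (t+1) := Nat.mul_le_mul_left _ (by omega)

lemma qq_two_le {d : ℕ → ℕ} (hd : ∀ r, 1 ≤ r → 2 ≤ d r) {s : ℕ} (hs : 1 ≤ s) :
    2 ≤ qq d s := by
  obtain ⟨t, rfl⟩ : ∃ t, s = t + 1 := ⟨s - 1, by omega⟩
  rw [qq_succ]
  have h1 := qq_pos hd t
  have h2 := hd (t+1) (by omega)
  calc 2 ≤ 1 * d (t+1) := by omega
  _ ≤ qq d t * d (t+1) := Nat.mul_le_mul_right _ h1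

lemma qq_strictMono {d : ℕ → ℕ} (hd : ∀ r, 1 ≤ r → 2 ≤ d r) : StrictMono (qq d) := by
  apply strictMono_nat_of_lt_succ
  intro j
  rw [qq_succ]
  have h1 := qq_pos hd j
  have h2 := hd (j+1) (by omega)
  have h3 : qq d j * 2 ≤ qq d j * d (j+1) := Nat.mul_le_mul_left _ h2
  omega

lemma qq_dvd {d : ℕ → ℕ} {j t : ℕ} (h : j ≤ t) : qq d j ∣ qq d t :=
  Finset.prod_dvd_prod_of_subset _ _ _ (Finset.Icc_subset_Icc_right h)

lemma sum_geom {d : ℕ → ℕ} (hd : ∀ r, 1 ≤ r → 2 ≤ d r) (s : ℕ) :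
    ∑ r ∈ Finset.Icc 1 s, (d r - 1) * ∏ i ∈ Finset.Icc 1 (r - 1), d i = qq d s - 1 := by
  induction s with
  | zero => simp [qq_zero]
  | succ t ih =>
    rw [Finset.sum_Icc_succ_top ((by omega : 1 ≤ t + 1)), ih]
    have h1 := qq_pos hd t
    have h2 := hd (t+1) (by omega)
    have : (∏ i ∈ Finset.Icc 1 (t + 1 - 1), d i) = qq d t := by
      simp [qq]
    rw [this, qq_succ]
    rw [Nat.sub_one_mul]
    have h3 : qq d t ≤ d (t+1) * qq d t := Nat.le_mul_of_pos_left _ (by omega)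
    rw [mul_comm (qq d t) (d (t+1))]
    omega

lemma digit_sum_le {d : ℕ → ℕ} (hd : ∀ r, 1 ≤ r → 2 ≤ d r) (b : ℕ → ℕ)
    (hb : ∀ r, 1 ≤ r → b r < d r) (j : ℕ) :
    ∑ r ∈ Finset.Icc 1 j, b r * qq d (r - 1) ≤ qq d j - 1 := by
  induction j with
  | zero => simp [qq_zero]
  | succ t ih =>
    rw [Finset.sum_Icc_succ_top ((by omega : 1 ≤ t + 1))]
    have h1 := qq_pos hd t
    have h2 := hd (t+1) (by omega)
    have hb1 := hb (t+1) (by omega)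
    have : (t + 1 - 1) = t := by omega
    rw [this, qq_succ]
    have h4 : b (t+1) * qq d t ≤ (d (t+1) - 1) * qq d t :=
      Nat.mul_le_mul_right _ (by omega)
    rw [Nat.sub_one_mul] at h4
    have h3 : qq d t ≤ d (t+1) * qq d t := Nat.le_mul_of_pos_left _ (by omega)
    rw [mul_comm (qq d t) (d (t+1))]
    omega

lemma digit_sum_max {d : ℕ → ℕ} (hd : ∀ r, 1 ≤ r → 2 ≤ d r) (b : ℕ → ℕ)
    (hb : ∀ r, 1 ≤ r → b r < d r) (j : ℕ)
    (h : ∑ r ∈ Finset.Icc 1 j, b r * qq d (r - 1) = qq d j - 1) :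
    ∀ r, 1 ≤ r → r ≤ j → b r = d r - 1 := by
  induction j with
  | zero => intro r h1 h2; omega
  | succ t ih =>
    rw [Finset.sum_Icc_succ_top ((by omega : 1 ≤ t + 1))] at h
    have h1 := qq_pos hd t
    have h2 := hd (t+1) (by omega)
    have hb1 := hb (t+1) (by omega)
    have hle := digit_sum_le hd b hb t
    have ht : (t + 1 - 1) = t := by omega
    rw [ht, qq_succ] at h
    have hbig : qq d t * 2 ≤ qq d t * d (t+1) := Nat.mul_le_mul_left _ h2
    -- show b (t+1) = d (t+1) - 1
    have hbt : b (t+1) = d (t+1) - 1 := by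
      by_contra hc
      have hb2 : b (t+1) ≤ d (t+1) - 2 := by omega
      have : b (t+1) * qq d t ≤ (d (t+1) - 2) * qq d t :=
        Nat.mul_le_mul_right _ hb2
      rw [Nat.sub_mul, two_mul] at this
      rw [mul_comm (qq d t) (d (t+1))] at h hbig
      omega
    have hS : ∑ r ∈ Finset.Icc 1 t, b r * qq d (r - 1) = qq d t - 1 := by
      rw [hbt, Nat.sub_one_mul] at h
      rw [mul_comm (qq d t) (d (t+1))] at h hbig
      omega
    intro r hr1 hr2
    rcases Nat.lt_or_ge r (t+1) with hlt | hge
    · exact ih hS r hr1 (by omega)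
    · have : r = t + 1 := by omega
      rw [this]; exact hbt

/-- The key divisibility characterization. -/
lemma key_dvd {d : ℕ → ℕ} (hd : ∀ r, 1 ≤ r → 2 ≤ d r) (b : ℕ → ℕ)
    (h0 : b 0 = 0) (hb : ∀ r, 1 ≤ r → b r < d r)
    (hfin : (Function.support b).Finite) (n : ℕ)
    (hn : n = ∑ᶠ r : ℕ, b r * ∏ i ∈ Finset.Icc 1 (r - 1), d i) (j : ℕ) :
    (qq d j ∣ n + 1) ↔ ∀ r, 1 ≤ r → r ≤ j → b r = d r - 1 := by
  classical
  set N := max j (hfin.toFinset.sup id) with hN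
  have hNj : j ≤ N := le_max_left _ _
  have hsupp : Function.support (fun r => b r * ∏ i ∈ Finset.Icc 1 (r - 1), d i)
      ⊆ (Finset.Icc 1 N : Finset ℕ) := by
    intro r hr
    have hbr : b r ≠ 0 := by
      intro hz; apply hr; simp [hz]
    have hr0 : r ≠ 0 := by rintro rfl; exact hbr h0
    have hrsup : r ∈ hfin.toFinset := by simpa using hbr
    have : r ≤ hfin.toFinset.sup id := Finset.le_sup (f := id) hrsup
    simp only [Finset.coe_Icc, Set.mem_Icc]
    omega
  have hrep : n = ∑ r ∈ Finset.Icc 1 N, b r * qq d (r - 1) := by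
    rw [hn, finsum_eq_sum_of_support_subset _ hsupp]
    rfl
  have hsplit : ∑ r ∈ Finset.Icc 1 N, b r * qq d (r - 1) =
      (∑ r ∈ Finset.Icc 1 j, b r * qq d (r - 1)) +
      ∑ r ∈ Finset.Ioc j N, b r * qq d (r - 1) := by
    have e0 : ∀ M : ℕ, Finset.Icc 1 M = Finset.Ioc 0 M := fun M => Finset.Icc_add_one_left_eq_Ioc 0 M
    rw [e0 N, e0 j]
    exact (Finset.sum_Ioc_consecutive _ (Nat.zero_le j) hNj).symm
  have htail : qq d j ∣ ∑ r ∈ Finset.Ioc j N, b r * qq d (r - 1) := by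
    apply Finset.dvd_sum
    intro r hr
    rw [Finset.mem_Ioc] at hr
    exact Dvd.dvd.mul_left (qq_dvd (by omega)) _
  obtain ⟨c, hc⟩ := htail
  have hsum_le := digit_sum_le hd b hb j
  have hq1 := qq_pos hd j
  constructor
  · intro hdvd
    apply digit_sum_max hd b hb j
    have hdvd' : qq d j ∣ (∑ r ∈ Finset.Icc 1 j, b r * qq d (r - 1)) + 1 := by
      have : n + 1 = ((∑ r ∈ Finset.Icc 1 j, b r * qq d (r - 1)) + 1) + qq d j * c := by
        rw [hrep, hsplit, hc]; ring
      rw [this] at hdvd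
      exact (Nat.dvd_add_right (Dvd.intro c rfl)).mp (by rwa [add_comm] at hdvd)
    have hle2 : qq d j ≤ (∑ r ∈ Finset.Icc 1 j, b r * qq d (r - 1)) + 1 :=
      Nat.le_of_dvd (by omega) hdvd'
    have := Nat.eq_of_dvd_of_lt_two_mul (by omega) hdvd' (by omega)
    omega
  · intro hmax
    have hS : ∑ r ∈ Finset.Icc 1 j, b r * qq d (r - 1) = qq d j - 1 := by
      have := sum_geom hd j
      rw [← this]
      apply Finset.sum_congr rfl
      intro r hr
      rw [Finset.mem_Icc] at hr
      rw [hmax r hr.1 hr.2]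
      rfl
    rw [hrep, hsplit, hS, hc]
    have : qq d j - 1 + qq d j * c + 1 = qq d j * (c + 1) := by ring_nf; omega
    rw [this]
    exact Dvd.intro _ rfl



/-- Transition probabilities of the stochastic adding machine on `ℤ₊`, given the counter
function `sc` : `p(n,n) = 1 - p₁`; `p(n,n+1) = ∏_{r=1}^{s_n} p_r`;
`p(n, n - ∑_{r=1}^s (d_r-1) q_{r-1}) = (1-p_{s+1}) ∏_{r=1}^s p_r` for `1 ≤ s ≤ s_n - 1`;
and `0` otherwise.  (Since the target states are pairwise distinct, the sum of indicator
terms below agrees with the case-by-case definition.) -/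
noncomputable def tp (d : ℕ → ℕ) (p : ℕ → ℝ) (sc : ℕ → ℕ) (n m : ℕ) : ℝ :=
  (if m = n then 1 - p 1 else 0) +
  (if m = n + 1 then ∏ r ∈ Finset.Icc 1 (sc n), p r else 0) +
  ∑ s ∈ Finset.Icc 1 (sc n - 1),
    (if m + ∑ r ∈ Finset.Icc 1 s, (d r - 1) * ∏ i ∈ Finset.Icc 1 (r - 1), d i = n
      then (1 - p (s + 1)) * ∏ r ∈ Finset.Icc 1 s, p r else 0)

/-- Column sums of the transition matrix: for every `m ≥ 1`, `∑_n p(n,m) = 1`, while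
`∑_n p(n,0) = 1 - ∏_{r=1}^∞ p_r`; in particular the matrix is doubly stochastic iff
`∏_{r=1}^∞ p_r = 0`.  Here `L` denotes the limit of the partial products. -/
theorem stmt17 (d : ℕ → ℕ) (p : ℕ → ℝ)
    (hd : ∀ r, 1 ≤ r → 2 ≤ d r) (hp : ∀ r, 1 ≤ r → 0 < p r ∧ p r ≤ 1)
    (a : ℕ → ℕ → ℕ)
    (ha : ∀ n, a n 0 = 0 ∧ (∀ r, 1 ≤ r → a n r < d r) ∧
      (Function.support (a n)).Finite ∧
      n = ∑ᶠ r : ℕ, a n r * ∏ i ∈ Finset.Icc 1 (r - 1), d i)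
    (sc : ℕ → ℕ)
    (hsc : ∀ n, 1 ≤ sc n ∧ a n (sc n) ≠ d (sc n) - 1 ∧
      ∀ r, 1 ≤ r → r < sc n → a n r = d r - 1)
    (L : ℝ)
    (hL : Filter.Tendsto (fun N => ∏ r ∈ Finset.Icc 1 N, p r) Filter.atTop (nhds L)) :
    (∀ m : ℕ, 1 ≤ m → ∑' n : ℕ, tp d p sc n m = 1) ∧
    (∑' n : ℕ, tp d p sc n 0 = 1 - L) ∧
    ((∀ m : ℕ, ∑' n : ℕ, tp d p sc n m = 1) ↔ L = 0) := by
  classical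
  have hP1 : (∏ r ∈ Finset.Icc 1 1, p r) = p 1 := by simp
  have hPsucc : ∀ s : ℕ, (∏ r ∈ Finset.Icc 1 (s+1), p r)
      = (∏ r ∈ Finset.Icc 1 s, p r) * p (s+1) :=
    fun s => Finset.prod_Icc_succ_top (by omega) _
  have hPnonneg : ∀ s : ℕ, 0 ≤ ∏ r ∈ Finset.Icc 1 s, p r :=
    fun s => Finset.prod_nonneg (fun r hr => (hp r (Finset.mem_Icc.mp hr).1).1.le)
  have hkey : ∀ n j, (qq d j ∣ n + 1) ↔ ∀ r, 1 ≤ r → r ≤ j → a n r = d r - 1 :=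
    fun n j => key_dvd hd (a n) (ha n).1 (ha n).2.1 (ha n).2.2.1 n (ha n).2.2.2 j
  have hlt : ∀ n s, s < sc n ↔ qq d s ∣ n + 1 := by
    intro n s
    constructor
    · intro h
      exact (hkey n s).2 (fun r h1 h2 => (hsc n).2.2 r h1 (by omega))
    · intro h
      by_contra hc
      push_neg at hc
      exact (hsc n).2.1 ((hkey n s).1 h (sc n) (hsc n).1 (by omega))
  have tp_eq : ∀ n m, tp d p sc n m =
      (if m = n then 1 - p 1 else 0) +
      (if m = n + 1 then ∏ r ∈ Finset.Icc 1 (sc n), p r else 0) +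
      ∑ s ∈ Finset.Icc 1 (sc n - 1),
        (if m + qq d s = n + 1 then (1 - p (s + 1)) * ∏ r ∈ Finset.Icc 1 s, p r else 0) := by
    intro n m
    unfold tp
    congr 1
    apply Finset.sum_congr rfl
    intro s _
    have h2 := qq_pos hd s
    rw [sum_geom hd s]
    exact if_congr (by omega) rfl rfl
  have E1 : ∀ n, tp d p sc n n = 1 - p 1 := by
    intro n
    rw [tp_eq, if_pos rfl, if_neg (by omega)]
    rw [Finset.sum_eq_zero, add_zero, add_zero]
    intro s hs
    rw [Finset.mem_Icc] at hs
    have := qq_two_le hd hs.1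
    exact if_neg (by omega)
  have E2 : ∀ n, tp d p sc n (n+1) = ∏ r ∈ Finset.Icc 1 (sc n), p r := by
    intro n
    rw [tp_eq, if_neg (by omega), if_pos rfl]
    rw [Finset.sum_eq_zero, zero_add, add_zero]
    intro s hs
    rw [Finset.mem_Icc] at hs
    have := qq_two_le hd hs.1
    exact if_neg (by omega)
  have E3 : ∀ n m s0, m + qq d s0 = n + 1 → s0 ∈ Finset.Icc 1 (sc n - 1) →
      tp d p sc n m = (1 - p (s0+1)) * ∏ r ∈ Finset.Icc 1 s0, p r := by
    intro n m s0 hcond hmem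
    have hmem' := Finset.mem_Icc.mp hmem
    have h2 := qq_two_le hd hmem'.1
    rw [tp_eq, if_neg (by omega), if_neg (by omega), zero_add, zero_add]
    rw [Finset.sum_eq_single_of_mem s0 hmem]
    · rw [if_pos hcond]
    · intro b hb hne
      rw [Finset.mem_Icc] at hb
      apply if_neg
      intro hc
      exact hne ((qq_strictMono hd).injective (by omega))
  have E0 : ∀ n m, m ≠ n → m ≠ n + 1 →
      (∀ s, 1 ≤ s → s ≤ sc n - 1 → m + qq d s ≠ n + 1) → tp d p sc n m = 0 := by
    intro n m h1 h2 h3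
    rw [tp_eq, if_neg h1, if_neg h2, zero_add, zero_add]
    apply Finset.sum_eq_zero
    intro s hs
    rw [Finset.mem_Icc] at hs
    exact if_neg (h3 s hs.1 hs.2)
  have hterm : ∀ s : ℕ, (1 - p (s+1)) * ∏ r ∈ Finset.Icc 1 s, p r =
      (∏ r ∈ Finset.Icc 1 s, p r) - ∏ r ∈ Finset.Icc 1 (s+1), p r := by
    intro s
    rw [hPsucc s]
    ring
  have htele : ∀ j : ℕ, ∑ s ∈ Finset.Icc 1 j,
      ((∏ r ∈ Finset.Icc 1 s, p r) - ∏ r ∈ Finset.Icc 1 (s+1), p r)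
      = p 1 - ∏ r ∈ Finset.Icc 1 (j+1), p r := by
    intro j
    induction j with
    | zero => simp
    | succ t ih =>
      rw [Finset.sum_Icc_succ_top (by omega : 1 ≤ t + 1), ih]
      ring
  -- Part 1 : columns m ≥ 1
  have part1 : ∀ m' : ℕ, ∑' n : ℕ, tp d p sc n (m'+1) = 1 := by
    intro m'
    have hk1 : 1 ≤ sc m' := (hsc m').1
    set k := sc m' with hk
    have hdvd1 : qq d (k-1) ∣ m' + 1 := (hlt m' (k-1)).1 (by omega)
    have hndvd : ¬ qq d k ∣ m' + 1 := fun h => absurd ((hlt m' k).2 h) (lt_irrefl k)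
    have hvan : ∀ n ∉ insert (m'+1) (insert m'
        ((Finset.Icc 1 (k-1)).image fun s => m' + qq d s)), tp d p sc n (m'+1) = 0 := by
      intro n hn
      simp only [Finset.mem_insert, Finset.mem_image, Finset.mem_Icc, not_or,
        not_exists] at hn
      obtain ⟨hn1, hn2, hn3⟩ := hn
      apply E0
      · omega
      · omega
      · intro s hs1 hs2 hc
        rcases Nat.lt_or_ge s k with hlt' | hge
        · exact hn3 s ⟨⟨hs1, by omega⟩, by omega⟩
        · have hdvdk : qq d k ∣ qq d s := qq_dvd hge
          have hnd : ¬ qq d k ∣ n + 1 := by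
            rw [show n + 1 = qq d s + (m' + 1) by omega, Nat.dvd_add_right hdvdk]
            exact hndvd
          have hscn : sc n ≤ k := by
            by_contra hcc
            push_neg at hcc
            exact hnd ((hlt n k).1 hcc)
          have := (hsc n).1
          omega
    rw [tsum_eq_sum hvan]
    have hmem1 : (m'+1) ∉ insert m' ((Finset.Icc 1 (k-1)).image fun s => m' + qq d s) := by
      simp only [Finset.mem_insert, Finset.mem_image, Finset.mem_Icc, not_or, not_exists]
      refine ⟨by omega, ?_⟩
      rintro x ⟨⟨hx1, _⟩, hx3⟩
      have := qq_two_le hd hx1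
      omega
    have hmem2 : m' ∉ (Finset.Icc 1 (k-1)).image fun s => m' + qq d s := by
      simp only [Finset.mem_image, Finset.mem_Icc, not_exists]
      rintro x ⟨⟨hx1, _⟩, hx3⟩
      have := qq_two_le hd hx1
      omega
    rw [Finset.sum_insert hmem1, Finset.sum_insert hmem2,
      Finset.sum_image (fun x _ y _ hxy => (qq_strictMono hd).injective (by omega))]
    have hval : ∀ s ∈ Finset.Icc 1 (k-1), tp d p sc (m' + qq d s) (m'+1)
        = (∏ r ∈ Finset.Icc 1 s, p r) - ∏ r ∈ Finset.Icc 1 (s+1), p r := by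
      intro s hs
      rw [Finset.mem_Icc] at hs
      have hc : (m'+1) + qq d s = (m' + qq d s) + 1 := by omega
      have hm : s ∈ Finset.Icc 1 (sc (m' + qq d s) - 1) := by
        rw [Finset.mem_Icc]
        have hdv : qq d s ∣ (m' + qq d s) + 1 := by
          rw [show (m' + qq d s) + 1 = qq d s + (m'+1) by omega]
          exact dvd_add dvd_rfl (dvd_trans (qq_dvd hs.2) hdvd1)
        have := (hlt (m' + qq d s) s).2 hdv
        exact ⟨hs.1, by omega⟩
      rw [E3 _ _ s hc hm, hterm s]
    rw [Finset.sum_congr rfl hval, htele (k-1), E1 (m'+1), E2 m']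
    rw [show k - 1 + 1 = k by omega]
    ring
  -- Part 2 : column 0
  have part2 : HasSum (fun n => tp d p sc n 0) (1 - L) := by
    have einj : Function.Injective (fun s => qq d s - 1) := by
      intro x y hxy
      have hx := qq_pos hd x
      have hy := qq_pos hd y
      simp only at hxy
      exact (qq_strictMono hd).injective (by omega)
    have hvan0 : ∀ n ∉ Set.range (fun s => qq d s - 1), tp d p sc n 0 = 0 := by
      intro n hn
      apply E0
      · intro h
        exact hn ⟨0, by show qq d 0 - 1 = n; rw [qq_zero]; omega⟩
      · omega
      · intro s hs1 hs2 hc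
        exact hn ⟨s, by show qq d s - 1 = n; omega⟩
    rw [← einj.hasSum_iff hvan0]
    have hfun : ∀ s, ((fun n => tp d p sc n 0) ∘ fun s => qq d s - 1) s
        = (∏ r ∈ Finset.Icc 1 s, p r) - ∏ r ∈ Finset.Icc 1 (s+1), p r := by
      intro s
      cases s with
      | zero =>
        show tp d p sc (qq d 0 - 1) 0 = _
        rw [qq_zero]
        show tp d p sc 0 0 = _
        rw [E1 0]
        simp
      | succ t =>
        show tp d p sc (qq d (t+1) - 1) 0 = _
        have h2 := qq_two_le hd (show 1 ≤ t+1 by omega)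
        have hc : 0 + qq d (t+1) = (qq d (t+1) - 1) + 1 := by omega
        have hm : (t+1) ∈ Finset.Icc 1 (sc (qq d (t+1) - 1) - 1) := by
          rw [Finset.mem_Icc]
          have hdv : qq d (t+1) ∣ (qq d (t+1) - 1) + 1 := by
            rw [show (qq d (t+1) - 1) + 1 = qq d (t+1) by omega]
          have := (hlt _ (t+1)).2 hdv
          exact ⟨by omega, by omega⟩
        rw [E3 _ _ (t+1) hc hm, hterm]
    rw [funext hfun]
    apply (hasSum_iff_tendsto_nat_of_nonneg ?_ (1 - L)).2
    · have hps : ∀ N : ℕ, ∑ i ∈ Finset.range N,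
          ((∏ r ∈ Finset.Icc 1 i, p r) - ∏ r ∈ Finset.Icc 1 (i+1), p r)
          = 1 - ∏ r ∈ Finset.Icc 1 N, p r := by
        intro N
        rw [Finset.sum_range_sub' (fun i => ∏ r ∈ Finset.Icc 1 i, p r) N]
        simp
      exact Filter.Tendsto.congr (fun N => (hps N).symm) (Filter.Tendsto.const_sub 1 hL)
    · intro i
      rw [hPsucc i]
      have h1 := hPnonneg i
      have h2 := (hp (i+1) (by omega)).2
      nlinarith
  refine ⟨?_, part2.tsum_eq, ?_⟩
  · intro m hm
    obtain ⟨m', rfl⟩ : ∃ m', m = m' + 1 := ⟨m - 1, by omega⟩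
    exact part1 m'
  · constructor
    · intro h
      have h0 := h 0
      rw [part2.tsum_eq] at h0
      linarith
    · intro h0 m
      cases m with
      | zero => rw [part2.tsum_eq, h0]; ring
      | succ m' => exact part1 m'
end
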